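/- Let T be a directed tree such that the set Chi(u) of children of u is countably infinite for every u ∈ V. Then for each θ ∈ (0, ∞) and each u ∈ V there exists a family {λ_v}_{v∈Des(u)} of real numbers in (0, 1) ∪ {√θ} with λ_u² = θ such that for every v ∈ Des(u): (Σ_{w∈Chi(v)} λ_w²) · λ_v² = 1, Σ_{w∈Chi(v)} λ_w⁴ ≤ 1, and λ_w ∈ (0, 1) for all w ∈ Des(u) \ {u}. -/

import Mathlib

open scoped ENNReal NNReal Classical

noncomputable section

/-- A directed tree: a directed graph with nonempty vertex set in which each vertex has
at most one parent, there are no circuits, and the underlying undirected graph is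
connected and has no cycles (i.e. is a tree). -/
structure DirectedTree (V : Type) where
  edge : V → V → Prop
  nonempty : Nonempty V
  antisymm : ∀ u v : V, edge u v → ¬ edge v u
  parent_unique : ∀ u v w : V, edge u w → edge v w → u = v
  isTree : (SimpleGraph.fromRel edge).IsTree

namespace DirectedTree

variable {V : Type} (T : DirectedTree V)

/-- The set of children of a vertex. -/
def chi (u : V) : Set V := {v | T.edge u v}

/-- `v` has a parent. -/
def HasParent (v : V) : Prop := ∃ u, T.edge u v

/-- `V⁰`: the set of non-root vertices, i.e. the vertices possessing a parent. -/
def Vcirc : Set V := {v | T.HasParent v}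

/-- The tree is leafless if every vertex has a child. -/
def Leafless : Prop := ∀ u : V, (T.chi u).Nonempty

/-- The parent of a vertex (junk value if the vertex is a root). -/
def par (v : V) : V := if h : T.HasParent v then h.choose else T.nonempty.some

/-- The set of descendants of a vertex. -/
def desc (u : V) : Set V := {w | Relation.ReflTransGen T.edge u w}

/-- The formal weighted shift map `Λ_T` acting on all complex functions on `V`. -/
def Lam (lam : V → ℂ) (f : V → ℂ) : V → ℂ :=
  fun v => if T.HasParent v then lam v * f (T.par v) else 0

/-- The domain of the weighted shift `S_λ`. -/
def domain (lam : V → ℂ) : Set (lp (fun _ : V => ℂ) 2) :=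
  {f | Memℓp (T.Lam lam ⇑f) 2}

/-- The weighted shift `S_λ` (extended by `0` outside its domain). -/
def shift (lam : V → ℂ) (f : lp (fun _ : V => ℂ) 2) : lp (fun _ : V => ℂ) 2 :=
  if h : f ∈ T.domain lam then (⟨T.Lam lam ⇑f, h⟩ : lp (fun _ : V => ℂ) 2) else 0

/-- The domain of `S_λ²`. -/
def squareDomain (lam : V → ℂ) : Set (lp (fun _ : V => ℂ) 2) :=
  {f | f ∈ T.domain lam ∧ T.shift lam f ∈ T.domain lam}

/-- The domain of the adjoint `S_λ*`. -/
def adjDomain (lam : V → ℂ) : Set (lp (fun _ : V => ℂ) 2) :=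
  {g | ∃ h : lp (fun _ : V => ℂ) 2,
    ∀ f ∈ T.domain lam, (inner ℂ (T.shift lam f) g : ℂ) = inner ℂ f h}

/-- `S_λ` is hyponormal: it is densely defined, `D(S_λ) ⊆ D(S_λ*)` and
`‖S_λ* f‖ ≤ ‖S_λ f‖` for every `f ∈ D(S_λ)` (the adjoint value at `f` being any vector
`h` satisfying `⟪S_λ g, f⟫ = ⟪g, h⟫` for all `g ∈ D(S_λ)`; it is unique by density). -/
def IsHyponormal (lam : V → ℂ) : Prop :=
  Dense (T.domain lam) ∧ T.domain lam ⊆ T.adjDomain lam ∧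
    ∀ f ∈ T.domain lam, ∀ h : lp (fun _ : V => ℂ) 2,
      (∀ g ∈ T.domain lam, (inner ℂ (T.shift lam g) f : ℂ) = inner ℂ g h) →
        ‖h‖ ≤ ‖T.shift lam f‖

/-- `ζ_u = (Σ_{v ∈ Chi(u)} |λ_v|²)^{1/2} ∈ [0,∞]`. -/
def zeta (lam : V → ℂ) (u : V) : ℝ≥0∞ :=
  (∑' v : T.chi u, ((‖lam (v : V)‖₊ : ℝ≥0∞)) ^ 2) ^ (1/2 : ℝ)

end DirectedTree

/-! A vertex `v` with `λ_v² = c > 0` gives its children, enumerated as `w₀, w₁, …`, the squared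
weights `c / (1 + c²)^(j+1)`: they are below `1`, sum to `1 / c`, and their squares sum to
`1 / (c² + 2) ≤ 1`. Starting from `λ_u² = θ` this determines the weights on `Des(u)` by recursion
on the depth below `u`. The recursion is consistent because a directed tree has no directed
cycle: on a directed cycle the parent map is periodic, and one period of it, traced in the
underlying undirected graph, would be a closed trail of positive length in a tree. -/

def geomWeight (c : ℝ) (j : ℕ) : ℝ := c / (1 + c ^ 2) ^ (j + 1)

lemma geomWeight_pos {c : ℝ} (hc : 0 < c) (j : ℕ) : 0 < geomWeight c j := by
  unfold geomWeight; positivity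

lemma geomWeight_lt_one (c : ℝ) (j : ℕ) : geomWeight c j < 1 := by
  have hle : 1 + c ^ 2 ≤ (1 + c ^ 2) ^ (j + 1) := 
    le_self_pow₀ (le_add_of_nonneg_right (sq_nonneg c)) j.succ_ne_zero
  rw [geomWeight, div_lt_one (by positivity)]
  nlinarith [sq_nonneg (c - 1)]

lemma hasSum_geomWeight {c : ℝ} (hc : c ≠ 0) : HasSum (geomWeight c) c⁻¹ := by
  have hr : (1 + c ^ 2)⁻¹ < 1 := inv_lt_one_of_one_lt₀ (by simpa using sq_pos_of_ne_zero hc)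
  have hterm : geomWeight c = fun j => c / (1 + c ^ 2) * ((1 + c ^ 2)⁻¹) ^ j := by
    ext j; rw [geomWeight, pow_succ, inv_pow]; field_simp
  have hsum : c⁻¹ = c / (1 + c ^ 2) * (1 - (1 + c ^ 2)⁻¹)⁻¹ := by
    field_simp; ring
  rw [hterm, hsum]
  exact (hasSum_geometric_of_lt_one (by positivity) hr).mul_left _

lemma hasSum_geomWeight_sq {c : ℝ} (hc : c ≠ 0) :
    HasSum (fun j => geomWeight c j ^ 2) (c ^ 2 + 2)⁻¹ := by
  have hr : ((1 + c ^ 2) ^ 2)⁻¹ < 1 :=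
    inv_lt_one_of_one_lt₀ (by nlinarith [sq_pos_of_ne_zero hc])
  have hterm : (fun j => geomWeight c j ^ 2) =
      fun j => c ^ 2 / (1 + c ^ 2) ^ 2 * (((1 + c ^ 2) ^ 2)⁻¹) ^ j := by
    ext j; rw [geomWeight, div_pow, ← pow_mul, inv_pow, ← pow_mul]; field_simp; ring
  have hsum : (c ^ 2 + 2)⁻¹ = c ^ 2 / (1 + c ^ 2) ^ 2 * (1 - ((1 + c ^ 2) ^ 2)⁻¹)⁻¹ := by
    have hq : 1 - ((1 + c ^ 2) ^ 2)⁻¹ = c ^ 2 * (c ^ 2 + 2) / (1 + c ^ 2) ^ 2 := by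
      field_simp; ring
    have hc2 : c ^ 2 + 2 ≠ 0 := by positivity
    rw [hq]; field_simp
  rw [hterm, hsum]
  exact (hasSum_geometric_of_lt_one (by positivity) hr).mul_left _

namespace DirectedTree

variable {V : Type} (T : DirectedTree V)

lemma edge_par {v : V} (h : T.HasParent v) : T.edge (T.par v) v := by
  rw [par, dif_pos h]
  exact h.choose_spec

lemma par_eq_of_edge {v w : V} (h : T.edge v w) : T.par w = v :=
  T.parent_unique _ _ _ (T.edge_par ⟨v, h⟩) h

lemma exists_par_iterate_eq_of_mem_desc {u w : V} (hw : w ∈ T.desc u) :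
    ∃ k, T.par^[k] w = u := by
  induction hw with
  | refl => exact ⟨0, rfl⟩
  | tail _ hcb ih =>
    obtain ⟨k, hk⟩ := ih
    exact ⟨k + 1, by rw [Function.iterate_succ_apply, T.par_eq_of_edge hcb, hk]⟩

lemma adj_par {v : V} (h : T.HasParent v) : (SimpleGraph.fromRel T.edge).Adj v (T.par v) := by
  have hpv := T.edge_par h
  refine (SimpleGraph.fromRel_adj _ _ _).mpr ⟨fun hv => ?_, Or.inr hpv⟩
  rw [← hv] at hpv
  exact T.antisymm _ _ hpv hpv

def parWalk : (k : ℕ) → (x : V) → (∀ i, T.HasParent (T.par^[i] x)) →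
    (SimpleGraph.fromRel T.edge).Walk x (T.par^[k] x)
  | 0, _, _ => .nil
  | k + 1, x, hx => .cons (T.adj_par (hx 0)) (parWalk k (T.par x) fun i => hx (i + 1))

lemma edges_parWalk (k : ℕ) (x : V) (hx : ∀ i, T.HasParent (T.par^[i] x)) :
    (T.parWalk k x hx).edges = (List.range k).map fun i => s(T.par^[i] x, T.par^[i + 1] x) := by
  induction k generalizing x with
  | zero => rfl
  | succ k ih =>
    simp only [parWalk, List.range_succ_eq_map, List.map_cons, List.map_map]
    exact congrArg _ (ih _ _)

lemma not_isPeriodicPt_par {x : V} (hx : ∀ i, T.HasParent (T.par^[i] x)) {k : ℕ} (hk : 0 < k) :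
    ¬ Function.IsPeriodicPt T.par k x := by
  intro hper
  set m := Function.minimalPeriod T.par x
  have hinj : Set.InjOn (fun i => T.par^[i] x) (Set.Iio m) :=
    Function.iterate_injOn_Iio_minimalPeriod
  let W := (T.parWalk m x hx).copy rfl Function.iterate_minimalPeriod
  have htrail : W.IsTrail := by
    rw [SimpleGraph.Walk.isTrail_def, SimpleGraph.Walk.edges_copy, edges_parWalk]
    refine List.Nodup.map_on (fun i hi j hj hij => ?_) List.nodup_range
    rcases Sym2.eq_iff.mp hij with ⟨hij, -⟩ | ⟨hij, hji⟩
    · exact hinj (by simpa using hi) (by simpa using hj) hij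
    · -- `par^[i] x` and `par^[j] x` would each be the parent of the other
      have hi' := T.edge_par (hx i)
      rw [← Function.iterate_succ_apply' T.par, hji] at hi'
      have hj' := T.edge_par (hx j)
      rw [← Function.iterate_succ_apply' T.par, ← hij] at hj'
      exact absurd hj' (T.antisymm _ _ hi')
  have hnil := SimpleGraph.Walk.isPath_iff_nil.mp
    ((T.isTree.isAcyclic.isPath_iff_isTrail W).mpr htrail)
  have hlen : W.edges.length = m := by
    rw [SimpleGraph.Walk.edges_copy, edges_parWalk, List.length_map, List.length_range]
  rw [SimpleGraph.Walk.length_edges, SimpleGraph.Walk.length_eq_zero_iff.mpr hnil] at hlen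
  exact (hper.minimalPeriod_pos hk).ne hlen

lemma hasParent_and_transGen_par {x : V} (hx : Relation.TransGen T.edge x x) :
    T.HasParent x ∧ Relation.TransGen T.edge (T.par x) (T.par x) := by
  obtain ⟨y, hxy, hyx⟩ := Relation.TransGen.tail'_iff.mp hx
  rw [T.par_eq_of_edge hyx]
  exact ⟨⟨y, hyx⟩, Relation.TransGen.head' hyx hxy⟩

lemma not_transGen_self (x : V) : ¬ Relation.TransGen T.edge x x := by
  intro hx
  have horbit (i : ℕ) : Relation.TransGen T.edge (T.par^[i] x) (T.par^[i] x) := by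
    induction i with
    | zero => exact hx
    | succ i ih => rw [Function.iterate_succ_apply']; exact (T.hasParent_and_transGen_par ih).2
  obtain ⟨y, hxy, hyx⟩ := Relation.TransGen.tail'_iff.mp hx
  obtain ⟨k, hk⟩ := T.exists_par_iterate_eq_of_mem_desc hxy
  refine T.not_isPeriodicPt_par (fun i => (T.hasParent_and_transGen_par (horbit i)).1)
    k.succ_pos ?_
  show T.par^[k] (T.par x) = x
  rw [T.par_eq_of_edge hyx, hk]

lemma not_edge_of_mem_desc {u v : V} (hv : v ∈ T.desc u) : ¬ T.edge v u :=
  fun hvu => T.not_transGen_self u (Relation.TransGen.tail' hv hvu)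

/-- The number of parent steps from `w` up to `u` (junk value `0` if `w ∉ Des(u)`). -/
def depth (u w : V) : ℕ := if h : ∃ k, T.par^[k] w = u then Nat.find h else 0

lemma depth_self (u : V) : T.depth u u = 0 := by
  have h : ∃ k, T.par^[k] u = u := ⟨0, rfl⟩
  rw [depth, dif_pos h, Nat.find_eq_zero]
  rfl

lemma depth_ne_zero {u w : V} (hw : w ∈ T.desc u) (hne : w ≠ u) : T.depth u w ≠ 0 := by
  rw [depth, dif_pos (T.exists_par_iterate_eq_of_mem_desc hw), Ne, Nat.find_eq_zero]
  exact hne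

lemma depth_of_edge {u v w : V} (hv : v ∈ T.desc u) (hvw : T.edge v w) :
    T.depth u w = T.depth u v + 1 := by
  have hv' := T.exists_par_iterate_eq_of_mem_desc hv
  have hw' := T.exists_par_iterate_eq_of_mem_desc (hv.tail hvw)
  have hpar := T.par_eq_of_edge hvw
  have hne : w ≠ u := fun hwu => T.not_edge_of_mem_desc hv (hwu ▸ hvw)
  obtain ⟨j, hj⟩ := Nat.exists_eq_succ_of_ne_zero (T.depth_ne_zero (hv.tail hvw) hne)
  rw [depth, dif_pos hw'] at hj ⊢
  rw [depth, dif_pos hv']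
  have hju : T.par^[j] v = u := by
    have := Nat.find_spec hw'
    rwa [hj, Function.iterate_succ_apply, hpar] at this
  have hvu : T.par^[Nat.find hv' + 1] w = u := by
    rw [Function.iterate_succ_apply, hpar]; exact Nat.find_spec hv'
  have := Nat.find_min' hv' hju
  have := Nat.find_min' hw' hvu
  omega

lemma exists_bijective_childIndex (h : ∀ v : V, (T.chi v).Countable ∧ (T.chi v).Infinite) :
    ∃ idx : V → ℕ, ∀ v, Function.Bijective fun w : T.chi v => idx w := by
  have e (v : V) : T.chi v ≃ ℕ :=
    haveI := (h v).1.to_subtype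
    haveI := (h v).2.to_subtype
    nonempty_equiv_of_countable.some
  refine ⟨fun w => if hw : T.HasParent w then e (T.par w) ⟨w, T.edge_par hw⟩ else 0,
    fun v => ?_⟩
  convert (e v).bijective with w
  have he : ∀ a (ha : a = v) (haw : T.edge a w), e a ⟨w, haw⟩ = e v w := by
    rintro _ rfl _; rfl
  dsimp only
  rw [dif_pos ⟨v, w.2⟩]
  exact he _ (T.par_eq_of_edge w.2) _

variable (idx : V → ℕ) (θ : ℝ)

def weightSqAux : ℕ → V → ℝ
  | 0, _ => θ
  | k + 1, w => geomWeight (weightSqAux k (T.par w)) (idx w)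

def weightSq (u w : V) : ℝ := T.weightSqAux idx θ (T.depth u w) w

lemma weightSq_self (u : V) : T.weightSq idx θ u u = θ := by
  rw [weightSq, depth_self, weightSqAux]

lemma weightSq_of_edge {u v w : V} (hv : v ∈ T.desc u) (hvw : T.edge v w) :
    T.weightSq idx θ u w = geomWeight (T.weightSq idx θ u v) (idx w) := by
  rw [weightSq, T.depth_of_edge hv hvw, weightSqAux, T.par_eq_of_edge hvw, weightSq]

lemma weightSq_pos (hθ : 0 < θ) (u w : V) : 0 < T.weightSq idx θ u w := by
  suffices ∀ k w, 0 < T.weightSqAux idx θ k w from this _ _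
  intro k
  induction k with
  | zero => exact fun _ => hθ
  | succ k ih => exact fun w => geomWeight_pos (ih _) _

lemma weightSq_lt_one {u w : V} (hw : w ∈ T.desc u) (hne : w ≠ u) :
    T.weightSq idx θ u w < 1 := by
  obtain ⟨k, hk⟩ := Nat.exists_eq_succ_of_ne_zero (T.depth_ne_zero hw hne)
  rw [weightSq, hk, weightSqAux]
  exact geomWeight_lt_one _ _

lemma hasSum_children_weightSq {u v : V} (hv : v ∈ T.desc u)
    (hidx : Function.Bijective fun w : T.chi v => idx w) {F : ℝ → ℝ} {a : ℝ}
    (hF : HasSum (fun j => F (geomWeight (T.weightSq idx θ u v) j)) a) :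
    HasSum (fun w : T.chi v => F (T.weightSq idx θ u w)) a := by
  convert (Equiv.ofBijective _ hidx).hasSum_iff.mpr hF using 2 with w
  simp [T.weightSq_of_edge idx θ hv w.2]

end DirectedTree

/-- (‡‡): if every vertex has countably infinitely many children, then for each
`θ ∈ (0,∞)` and `u ∈ V` there is a family `{λ_v}_{v∈Des(u)}` of positive reals,
all lying in `(0,1)` except possibly `λ_u = √θ`, such that `λ_u² = θ`,
`(Σ_{w∈Chi(v)} λ_w²) λ_v² = 1` and `Σ_{w∈Chi(v)} λ_w⁴ ≤ 1` for every `v ∈ Des(u)`. -/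
theorem stmt15 {V : Type} (T : DirectedTree V)
    (h : ∀ u : V, (T.chi u).Countable ∧ (T.chi u).Infinite)
    (θ : ℝ) (hθ : 0 < θ) (u : V) :
    ∃ lam : V → ℝ, (∀ v ∈ T.desc u, 0 < lam v) ∧ lam u ^ 2 = θ ∧
      (∀ w ∈ T.desc u, w ≠ u → lam w < 1) ∧
      ∀ v ∈ T.desc u,
        Summable (fun w : T.chi v => lam (w:V) ^ 2) ∧
        (∑' w : T.chi v, lam (w:V) ^ 2) * lam v ^ 2 = 1 ∧
        Summable (fun w : T.chi v => lam (w:V) ^ 4) ∧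
        (∑' w : T.chi v, lam (w:V) ^ 4) ≤ 1 := by
  obtain ⟨idx, hidx⟩ := T.exists_bijective_childIndex h
  set c := T.weightSq idx θ u
  have hc (v : V) : 0 < c v := T.weightSq_pos idx θ hθ u v
  have hsq (v : V) : √(c v) ^ 2 = c v := Real.sq_sqrt (hc v).le
  have hfourth (v : V) : √(c v) ^ 4 = c v ^ 2 := by
    rw [show (4 : ℕ) = 2 * 2 from rfl, pow_mul, hsq]
  refine ⟨fun v => √(c v), fun v _ => Real.sqrt_pos.mpr (hc v),
    by rw [hsq]; exact T.weightSq_self idx θ u, fun w hw hne => ?_, fun v hv => ?_⟩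
  · rw [Real.sqrt_lt' one_pos, one_pow]
    exact T.weightSq_lt_one idx θ hw hne
  have h2 : HasSum (fun w : T.chi v => √(c w) ^ 2) (c v)⁻¹ := by
    simp only [hsq]
    exact T.hasSum_children_weightSq idx θ hv (hidx v) (F := id) (hasSum_geomWeight (hc v).ne')
  have h4 : HasSum (fun w : T.chi v => √(c w) ^ 4) (c v ^ 2 + 2)⁻¹ := by
    simp only [hfourth]
    exact T.hasSum_children_weightSq idx θ hv (hidx v) (F := (· ^ 2))
      (hasSum_geomWeight_sq (hc v).ne')
  refine ⟨h2.summable, ?_, h4.summable, ?_⟩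
  · rw [h2.tsum_eq, hsq, inv_mul_cancel₀ (hc v).ne']
  · rw [h4.tsum_eq]
    exact inv_le_one_of_one_le₀ (by nlinarith)
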